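/- Two 2-cocycles c, c' of a ℚ-Lie algebra g with values in ℚ define isomorphic Sridharan algebras U_c(g) ≅ U_{c'}(g) (as filtered algebras with g generating) if and only if c and c' are cohomologous. -/

import Mathlib

open TensorProduct

namespace Sridharan

variable (L : Type*) [LieRing L] [LieAlgebra ℚ L]

/-- `c` is a 2-cocycle of the `ℚ`-Lie algebra `L` with values in `ℚ`: an alternating bilinear
form with `c([x,y],z) + c([y,z],x) + c([z,x],y) = 0`. -/
def IsCocycle (c : L →ₗ[ℚ] L →ₗ[ℚ] ℚ) : Prop :=
  (∀ x : L, c x x = 0) ∧ ∀ x y z : L, c ⁅x, y⁆ z + c ⁅y, z⁆ x + c ⁅z, x⁆ y = 0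

/-- The defining relations of the Sridharan algebra `U_c(g) = T(g)/(xy - yx - [x,y] - c(x,y))`. -/
inductive Rel (c : L →ₗ[ℚ] L →ₗ[ℚ] ℚ) :
    TensorAlgebra ℚ L → TensorAlgebra ℚ L → Prop
  | rel (x y : L) : Rel c (TensorAlgebra.ι ℚ x * TensorAlgebra.ι ℚ y)
      (TensorAlgebra.ι ℚ y * TensorAlgebra.ι ℚ x + TensorAlgebra.ι ℚ ⁅x, y⁆
        + algebraMap ℚ (TensorAlgebra ℚ L) (c x y))

end Sridharan

/-- The Sridharan algebra `U_c(g)` associated to a 2-cocycle `c` of the `ℚ`-Lie algebra `g`: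
the quotient of the tensor algebra by the relations `xy - yx = [x,y] + c(x,y)`.
For `c = 0` this is the universal enveloping algebra `U(g)`. -/
def SridharanAlgebra (L : Type*) [LieRing L] [LieAlgebra ℚ L]
    (c : L →ₗ[ℚ] L →ₗ[ℚ] ℚ) : Type _ :=
  RingQuot (Sridharan.Rel L c)

namespace SridharanAlgebra

variable (L : Type*) [LieRing L] [LieAlgebra ℚ L] (c : L →ₗ[ℚ] L →ₗ[ℚ] ℚ)

instance : Ring (SridharanAlgebra L c) :=
  inferInstanceAs (Ring (RingQuot (Sridharan.Rel L c)))

instance : Algebra ℚ (SridharanAlgebra L c) :=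
  inferInstanceAs (Algebra ℚ (RingQuot (Sridharan.Rel L c)))

/-- The canonical linear map `g → U_c(g)`. -/
noncomputable def ι : L →ₗ[ℚ] SridharanAlgebra L c :=
  (RingQuot.mkAlgHom ℚ (Sridharan.Rel L c)).toLinearMap ∘ₗ TensorAlgebra.ι ℚ

end SridharanAlgebra

/-!
The substance is that `U_c(g)` is never the zero ring: granted that, applying an isomorphism
`φ` with `φ(x) = x + b(x)` to the relation `xy - yx = [x, y] + c(x, y)` shows that
`(c'(x, y) - c(x, y) - b[x, y]) • 1 = 0` in `U_{c'}(g)`, and conversely `x ↦ x - b(x)` respects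
the relations when `c - c' = b ∘ [·, ·]`.

Nontriviality is a Poincaré–Birkhoff–Witt argument. Fix a basis of `g` indexed by a linearly
ordered set and let the sorted words span a free module. Every word has a normal form there,
obtained by repeatedly rewriting its first descent `ij` (`j < i`) as `ji + [i, j] + c(i, j)`;
this terminates because each rewrite lowers the length or the number of inversions. "Prepend
`i` and normalize" defines operators `L_i` on the free module, and one shows, by induction on
(length, inversions), that the normal form of `i w` is `L_i` applied to that of `w`. The only
critical overlap, a word starting with three decreasing letters, is resolved by the Jacobi
identity together with the cocycle identity. The operators then satisfy the defining relations
of `U_c(g)`, which therefore acts on a nonzero module.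
-/

namespace Sridharan

section TwistedCommutator

variable {R L M : Type*} [CommRing R] [LieRing L] [LieAlgebra R L]
  [AddCommGroup M] [Module R M] (ρ : L →ₗ[R] Module.End R M) (c : L →ₗ[R] L →ₗ[R] R)

def twistedCommutator : L →ₗ[R] L →ₗ[R] Module.End R M :=
  LinearMap.mk₂ R (fun x y => ρ x * ρ y - ρ y * ρ x - ρ ⁅x, y⁆ - c x y • 1)
    (fun x x' y => by
      simp only [map_add, add_lie, add_mul, mul_add, LinearMap.add_apply, add_smul]
      abel)
    (fun r x y => by
      simp only [map_smul, smul_lie, LinearMap.smul_apply, smul_mul_assoc, mul_smul_comm,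
        smul_sub, smul_eq_mul, mul_smul])
    (fun x y y' => by
      simp only [map_add, lie_add, add_mul, mul_add, add_smul]
      abel)
    (fun r x y => by
      simp only [map_smul, lie_smul, smul_mul_assoc, mul_smul_comm, smul_sub, smul_eq_mul,
        mul_smul])

@[simp]
lemma twistedCommutator_apply (x y : L) :
    twistedCommutator ρ c x y = ρ x * ρ y - ρ y * ρ x - ρ ⁅x, y⁆ - c x y • 1 :=
  rfl

variable {ρ c}

lemma twistedCommutator_self (hc : c.IsAlt) (x : L) : twistedCommutator ρ c x x = 0 := by
  simp [hc.self_eq_zero]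

lemma twistedCommutator_swap (hc : c.IsAlt) (x y : L) :
    twistedCommutator ρ c y x = -twistedCommutator ρ c x y := by
  simp only [twistedCommutator_apply, ← hc.neg x y, ← lie_skew x y, map_neg, neg_smul]
  abel

lemma twistedCommutator_eq_zero_iff (x y : L) :
    twistedCommutator ρ c x y = 0 ↔
      ρ x * ρ y = ρ y * ρ x + ρ ⁅x, y⁆ + algebraMap R (Module.End R M) (c x y) := by
  rw [twistedCommutator_apply, Module.algebraMap_end_eq_smul_id, ← Module.End.one_eq_id,
    sub_sub, sub_sub, sub_eq_zero, add_assoc]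

lemma twistedCommutator_apply_eq_zero_of_basis {ι : Type*} (b : Module.Basis ι R L) {m : M}
    (h : ∀ p q, twistedCommutator ρ c (b p) (b q) m = 0) (x y : L) :
    twistedCommutator ρ c x y m = 0 := by
  have := LinearMap.ext_basis b b (B := (twistedCommutator ρ c).compr₂ (LinearMap.applyₗ m))
    (B' := 0) (by simpa using h)
  simpa using LinearMap.congr_fun₂ this x y

/-- The Jacobi identity and the cocycle identity let the twisted commutation relations
propagate from `m` to `ρ z m`. -/
theorem twistedCommutator_apply_apply_eq_zero
    (hcoc : ∀ x y z : L, c ⁅x, y⁆ z + c ⁅y, z⁆ x + c ⁅z, x⁆ y = 0) (hc : c.IsAlt) {m : M}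
    (hm : ∀ p q, twistedCommutator ρ c p q m = 0) {x y z : L}
    (hyz : twistedCommutator ρ c y z (ρ x m) = 0)
    (hxz : twistedCommutator ρ c x z (ρ y m) = 0) :
    twistedCommutator ρ c x y (ρ z m) = 0 := by
  have hρx := congrArg (ρ x) (hm y z)
  have hρy := congrArg (ρ y) (hm x z)
  have hρz := congrArg (ρ z) (hm x y)
  have hx := hm x ⁅y, z⁆
  have hy := hm y ⁅x, z⁆
  have hz := hm z ⁅x, y⁆
  have jacobi : ρ ⁅x, ⁅y, z⁆⁆ m = ρ ⁅y, ⁅x, z⁆⁆ m - ρ ⁅z, ⁅x, y⁆⁆ m := by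
    rw [leibniz_lie x y z, ← lie_skew ⁅x, y⁆ z]
    simp only [map_add, map_neg, LinearMap.add_apply, LinearMap.neg_apply]
    abel
  have cocycle : c x ⁅y, z⁆ = c y ⁅x, z⁆ - c z ⁅x, y⁆ := by
    have := hcoc x y z
    rw [← hc.neg z, ← hc.neg x, ← hc.neg y, ← lie_skew z x, map_neg] at this
    linear_combination -this
  simp only [twistedCommutator_apply, LinearMap.sub_apply, LinearMap.smul_apply,
    Module.End.mul_apply, Module.End.one_apply, map_sub, map_smul, map_zero]
    at hρx hρy hρz hx hy hz hyz hxz ⊢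
  linear_combination (norm := module)
    hρx + hxz + hρz - hyz - hρy + hx - hy + hz + jacobi + cocycle • m

end TwistedCommutator

section Words

variable {κ : Type*} [LinearOrder κ]

abbrev SortedWord (κ : Type*) [LinearOrder κ] : Type _ := {l : List κ // l.IsChain (· ≤ ·)}

def inversions : List κ → ℕ
  | [] => 0
  | a :: l => l.countP (· < a) + inversions l

lemma inversions_cons (a : κ) (l : List κ) :
    inversions (a :: l) = l.countP (· < a) + inversions l :=
  rfl

def weight (w : List κ) : ℕ ×ₗ ℕ := toLex (w.length, inversions w)

lemma weight_lt_iff {u w : List κ} :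
    weight u < weight w ↔
      u.length < w.length ∨ u.length = w.length ∧ inversions u < inversions w :=
  Prod.Lex.toLex_lt_toLex

lemma weight_lt_of_length_lt {u w : List κ} (h : u.length < w.length) : weight u < weight w :=
  weight_lt_iff.mpr (Or.inl h)

lemma weight_append_lt_append (p : List κ) {u w : List κ}
    (h : (u.Perm w ∧ inversions u < inversions w) ∨ u.length < w.length) :
    weight (p ++ u) < weight (p ++ w) := by
  rcases h with ⟨hperm, hinv⟩ | hlen
  · refine weight_lt_iff.mpr (Or.inr ⟨by simp [hperm.length_eq], ?_⟩)
    induction p with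
    | nil => exact hinv
    | cons a p ih =>
      rw [List.cons_append, List.cons_append, inversions_cons, inversions_cons,
        (hperm.append_left p).countP_eq]
      omega
  · exact weight_lt_of_length_lt (by simpa using hlen)

lemma inversions_cons_cons_lt {a b : κ} (hab : a < b) (l : List κ) :
    inversions (a :: b :: l) < inversions (b :: a :: l) := by
  simp only [inversions, List.countP_cons, decide_eq_true_eq, if_pos hab,
    if_neg (not_lt.mpr hab.le)]
  omega

lemma weight_append_swap_lt (p : List κ) {a b : κ} (hab : a < b) (l : List κ) :
    weight (p ++ a :: b :: l) < weight (p ++ b :: a :: l) :=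
  weight_append_lt_append p (Or.inl ⟨List.Perm.swap b a l, inversions_cons_cons_lt hab l⟩)

end Words

section NormalForm

variable {κ R L : Type*} [LinearOrder κ] [CommRing R] [LieRing L] [Module R L]
  (c : L →ₗ[R] L →ₗ[R] R) (b : Module.Basis κ R L)

noncomputable def reduceStep : List κ → (List κ →₀ R)
  | i :: j :: v =>
    if i ≤ j then Finsupp.mapDomain (i :: ·) (reduceStep (j :: v))
    else Finsupp.single (j :: i :: v) 1 + Finsupp.mapDomain (· :: v) (b.repr ⁅b i, b j⁆)
      + Finsupp.single v (c (b i) (b j))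
  | _ => 0

lemma reduceStep_of_le {i j : κ} (hij : i ≤ j) (v : List κ) :
    reduceStep c b (i :: j :: v) = Finsupp.mapDomain (i :: ·) (reduceStep c b (j :: v)) := by
  rw [reduceStep, if_pos hij]

lemma reduceStep_of_lt {i j : κ} (hji : j < i) (v : List κ) :
    reduceStep c b (i :: j :: v) = Finsupp.single (j :: i :: v) 1
      + Finsupp.mapDomain (· :: v) (b.repr ⁅b i, b j⁆) + Finsupp.single v (c (b i) (b j)) := by
  rw [reduceStep, if_neg (not_le.mpr hji)]

lemma perm_or_length_lt_of_mem_support_reduceStep :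
    ∀ {w u : List κ}, u ∈ (reduceStep c b w).support →
      (u.Perm w ∧ inversions u < inversions w) ∨ u.length < w.length
  | i :: j :: v, u, hu => by
    classical
    rcases le_or_gt i j with hij | hji
    · rw [reduceStep_of_le c b hij] at hu
      obtain ⟨u', hu', rfl⟩ := Finset.mem_image.mp (Finsupp.mapDomain_support hu)
      rcases perm_or_length_lt_of_mem_support_reduceStep hu' with ⟨hperm, hinv⟩ | hlen
      · refine Or.inl ⟨hperm.cons i, ?_⟩
        rw [inversions_cons, inversions_cons, hperm.countP_eq]
        omega
      · exact Or.inr (by simpa using hlen)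
    · rw [reduceStep_of_lt c b hji] at hu
      rcases Finset.mem_union.mp (Finsupp.support_add hu) with hu | hu
      · rcases Finset.mem_union.mp (Finsupp.support_add hu) with hu | hu
        · rw [Finset.mem_singleton.mp (Finsupp.support_single_subset hu)]
          exact Or.inl ⟨List.Perm.swap i j v, inversions_cons_cons_lt hji v⟩
        · obtain ⟨k, -, rfl⟩ := Finset.mem_image.mp (Finsupp.mapDomain_support hu)
          exact Or.inr (by simp)
      · rw [Finset.mem_singleton.mp (Finsupp.support_single_subset hu)]
        exact Or.inr (by simp)
  | [], u, hu | [_], u, hu => by simp [reduceStep] at hu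

lemma length_le_of_mem_support_reduceStep {w u : List κ} (hu : u ∈ (reduceStep c b w).support) :
    u.length ≤ w.length := by
  rcases perm_or_length_lt_of_mem_support_reduceStep c b hu with ⟨hperm, -⟩ | hlen
  · exact hperm.length_eq.le
  · exact hlen.le

lemma weight_append_lt_of_mem_support (p : List κ) {w u : List κ}
    (hu : u ∈ (reduceStep c b w).support) : weight (p ++ u) < weight (p ++ w) :=
  weight_append_lt_append p (perm_or_length_lt_of_mem_support_reduceStep c b hu)

noncomputable def normalForm (w : List κ) : SortedWord κ →₀ R :=
  if hw : w.IsChain (· ≤ ·) then Finsupp.single ⟨w, hw⟩ 1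
  else ∑ u ∈ (reduceStep c b w).support.attach, reduceStep c b w u • normalForm u
termination_by weight w
decreasing_by exact weight_append_lt_of_mem_support c b [] u.2

lemma normalForm_of_isChain {w : List κ} (hw : w.IsChain (· ≤ ·)) :
    normalForm c b w = Finsupp.single ⟨w, hw⟩ 1 := by
  rw [normalForm, dif_pos hw]

lemma normalForm_of_not_isChain {w : List κ} (hw : ¬ w.IsChain (· ≤ ·)) :
    normalForm c b w = Finsupp.linearCombination R (normalForm c b) (reduceStep c b w) := by
  rw [normalForm, dif_neg hw, Finsupp.linearCombination_apply, Finsupp.sum,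
    ← Finset.sum_attach (reduceStep c b w).support]

lemma normalForm_cons_cons_of_lt {i j : κ} (hji : j < i) (v : List κ) :
    normalForm c b (i :: j :: v) = normalForm c b (j :: i :: v)
      + Finsupp.linearCombination R (fun k => normalForm c b (k :: v)) (b.repr ⁅b i, b j⁆)
      + c (b i) (b j) • normalForm c b v := by
  have hw : ¬ (i :: j :: v).IsChain (· ≤ ·) := fun h =>
    (List.isChain_cons_cons.mp h).1.not_gt hji
  rw [normalForm_of_not_isChain c b hw, reduceStep_of_lt c b hji, map_add, map_add,
    Finsupp.linearCombination_single, Finsupp.linearCombination_mapDomain,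
    Finsupp.linearCombination_single, one_smul]
  rfl

noncomputable def basisAction (i : κ) : Module.End R (SortedWord κ →₀ R) :=
  Finsupp.linearCombination R fun w => normalForm c b (i :: w.1)

lemma basisAction_single (i : κ) (w : SortedWord κ) :
    basisAction c b i (Finsupp.single w 1) = normalForm c b (i :: w.1) := by
  rw [basisAction, Finsupp.linearCombination_single, one_smul]

noncomputable def rep : L →ₗ[R] Module.End R (SortedWord κ →₀ R) :=
  b.constr R (basisAction c b)

lemma rep_basis (i : κ) : rep c b (b i) = basisAction c b i :=
  b.constr_basis R _ i

lemma linearCombination_normalForm_cons {t : List κ}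
    (ht : ∀ k, normalForm c b (k :: t) = basisAction c b k (normalForm c b t)) (z : L) :
    Finsupp.linearCombination R (fun k => normalForm c b (k :: t)) (b.repr z)
      = rep c b z (normalForm c b t) := by
  simp only [ht, rep, Module.Basis.constr_apply, LinearMap.finsupp_sum_apply,
    Finsupp.linearCombination_apply, LinearMap.smul_apply]

end NormalForm

section Representation

variable {κ R L : Type*} [LinearOrder κ] [CommRing R] [LieRing L] [LieAlgebra R L]
  (c : L →ₗ[R] L →ₗ[R] R) (b : Module.Basis κ R L)

lemma twistedCommutator_rep_apply_normalForm_of_lt {p q : κ} (hqp : q < p) {t : List κ}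
    (hpq : normalForm c b (p :: q :: t) = basisAction c b p (normalForm c b (q :: t)))
    (hqp' : normalForm c b (q :: p :: t) = basisAction c b q (normalForm c b (p :: t)))
    (ht : ∀ k, normalForm c b (k :: t) = basisAction c b k (normalForm c b t)) :
    twistedCommutator (rep c b) c (b p) (b q) (normalForm c b t) = 0 := by
  simp only [twistedCommutator_apply, LinearMap.sub_apply, LinearMap.smul_apply,
    Module.End.mul_apply, Module.End.one_apply, rep_basis]
  rw [← ht q, ← hpq, ← ht p, ← hqp', normalForm_cons_cons_of_lt c b hqp,
    linearCombination_normalForm_cons c b ht]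
  abel

lemma twistedCommutator_rep_apply_normalForm (hc : c.IsAlt) (t : List κ)
    (ht : ∀ j s, s.length ≤ t.length + 1 →
      normalForm c b (j :: s) = basisAction c b j (normalForm c b s)) (x y : L) :
    twistedCommutator (rep c b) c x y (normalForm c b t) = 0 := by
  have of_lt : ∀ {p q : κ}, q < p → twistedCommutator (rep c b) c (b p) (b q)
      (normalForm c b t) = 0 := fun hqp =>
    twistedCommutator_rep_apply_normalForm_of_lt c b hqp (ht _ _ (by simp))
      (ht _ _ (by simp)) (fun k => ht k t (by omega))
  refine twistedCommutator_apply_eq_zero_of_basis b (fun p q => ?_) x y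
  rcases lt_trichotomy q p with hqp | rfl | hpq
  · exact of_lt hqp
  · rw [twistedCommutator_self hc, LinearMap.zero_apply]
  · rw [twistedCommutator_swap hc, LinearMap.neg_apply, of_lt hpq, neg_zero]

variable {c b}

lemma normalForm_cons_of_le {i x : κ} (hix : i ≤ x) {t : List κ}
    (hw : ¬ (x :: t).IsChain (· ≤ ·))
    (IH : ∀ j s, weight (j :: s) < weight (i :: x :: t) →
      normalForm c b (j :: s) = basisAction c b j (normalForm c b s)) :
    normalForm c b (i :: x :: t) = basisAction c b i (normalForm c b (x :: t)) := by
  have hiw : ¬ (i :: x :: t).IsChain (· ≤ ·) := fun h => hw (List.isChain_cons_cons.mp h).2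
  rw [normalForm_of_not_isChain c b hiw, reduceStep_of_le c b hix,
    normalForm_of_not_isChain c b hw, Finsupp.linearCombination_mapDomain,
    Finsupp.apply_linearCombination, Finsupp.linearCombination_apply,
    Finsupp.linearCombination_apply]
  refine Finsupp.sum_congr fun u hu => ?_
  rw [Function.comp_apply, Function.comp_apply,
    IH i u (weight_append_lt_of_mem_support c b [i] hu)]

lemma normalForm_cons_cons_of_twistedCommutator {i x : κ} (hxi : x < i) {t : List κ}
    (IH : ∀ j s, weight (j :: s) < weight (i :: x :: t) →
      normalForm c b (j :: s) = basisAction c b j (normalForm c b s))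
    (h : twistedCommutator (rep c b) c (b i) (b x) (normalForm c b t) = 0) :
    normalForm c b (i :: x :: t) = basisAction c b i (normalForm c b (x :: t)) := by
  have short : ∀ j, normalForm c b (j :: t) = basisAction c b j (normalForm c b t) :=
    fun j => IH j t (weight_lt_of_length_lt (by simp))
  rw [normalForm_cons_cons_of_lt c b hxi, linearCombination_normalForm_cons c b short,
    IH x (i :: t) (weight_append_swap_lt [] hxi t), short, short]
  simp only [twistedCommutator_apply, LinearMap.sub_apply, LinearMap.smul_apply,
    Module.End.mul_apply, Module.End.one_apply, rep_basis] at h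
  linear_combination (norm := module) -h

lemma twistedCommutator_rep_apply_normalForm_of_not_isChain {i x : κ} (hxi : x < i)
    {t : List κ} (ht : ¬ t.IsChain (· ≤ ·))
    (IH : ∀ j s, weight (j :: s) < weight (i :: x :: t) →
      normalForm c b (j :: s) = basisAction c b j (normalForm c b s)) :
    twistedCommutator (rep c b) c (b i) (b x) (normalForm c b t) = 0 := by
  rw [normalForm_of_not_isChain c b ht, Finsupp.apply_linearCombination,
    Finsupp.linearCombination_apply]
  refine Finset.sum_eq_zero fun u hu => ?_
  have hlen := length_le_of_mem_support_reduceStep c b hu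
  dsimp only [Function.comp_apply]
  rw [twistedCommutator_rep_apply_normalForm_of_lt c b hxi
    (IH i (x :: u) (weight_append_lt_of_mem_support c b [i, x] hu))
    (IH x (i :: u) ((weight_append_lt_of_mem_support c b [x, i] hu).trans
      (weight_append_swap_lt [] hxi t)))
    (fun k => IH k u (weight_lt_of_length_lt (by simp; omega))), smul_zero]

lemma twistedCommutator_rep_apply_normalForm_cons_of_lt
    (hcoc : ∀ x y z : L, c ⁅x, y⁆ z + c ⁅y, z⁆ x + c ⁅z, x⁆ y = 0) (hc : c.IsAlt)
    {i x y : κ} (hyx : y < x) (hxi : x < i) {v : List κ}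
    (IH : ∀ j s, weight (j :: s) < weight (i :: x :: y :: v) →
      normalForm c b (j :: s) = basisAction c b j (normalForm c b s)) :
    twistedCommutator (rep c b) c (b i) (b x) (normalForm c b (y :: v)) = 0 := by
  have short : ∀ j s, s.length ≤ v.length + 1 →
      normalForm c b (j :: s) = basisAction c b j (normalForm c b s) :=
    fun j s hs => IH j s (weight_lt_of_length_lt (by simp; omega))
  have hv : ∀ k, normalForm c b (k :: v) = rep c b (b k) (normalForm c b v) := fun k => by
    rw [rep_basis, short k v (by omega)]
  have hyi := hyx.trans hxi
  have xiyv := weight_append_swap_lt [] hxi (y :: v)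
  have iyxv := weight_append_swap_lt [i] hyx v
  rw [hv y]
  refine twistedCommutator_apply_apply_eq_zero hcoc hc
    (twistedCommutator_rep_apply_normalForm c b hc v short) ?_ ?_
  · rw [← hv i]
    exact twistedCommutator_rep_apply_normalForm_of_lt c b hyx
      (IH x (y :: i :: v) ((weight_append_swap_lt [x] hyi v).trans xiyv))
      (IH y (x :: i :: v) (((weight_append_swap_lt [] hyx (i :: v)).trans
        (weight_append_swap_lt [x] hyi v)).trans xiyv))
      (fun k => short k (i :: v) (by simp))
  · rw [← hv x]
    exact twistedCommutator_rep_apply_normalForm_of_lt c b hyi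
      (IH i (y :: x :: v) iyxv)
      (IH y (i :: x :: v) ((weight_append_swap_lt [] hyi (x :: v)).trans iyxv))
      (fun k => short k (x :: v) (by simp))

variable (c b)

theorem normalForm_cons (hcoc : ∀ x y z : L, c ⁅x, y⁆ z + c ⁅y, z⁆ x + c ⁅z, x⁆ y = 0)
    (hc : c.IsAlt) (i : κ) (w : List κ) :
    normalForm c b (i :: w) = basisAction c b i (normalForm c b w) := by
  suffices ∀ n, ∀ i w, weight (i :: w) = n →
      normalForm c b (i :: w) = basisAction c b i (normalForm c b w) from this _ i w rfl
  intro n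
  induction n using WellFoundedLT.induction with
  | _ n IH =>
  rintro i w rfl
  replace IH : ∀ j s, weight (j :: s) < weight (i :: w) →
      normalForm c b (j :: s) = basisAction c b j (normalForm c b s) :=
    fun j s h => IH _ h j s rfl
  by_cases hw : w.IsChain (· ≤ ·)
  · rw [normalForm_of_isChain c b hw, basisAction_single]
  obtain _ | ⟨x, t⟩ := w
  · exact absurd List.isChain_nil hw
  rcases le_or_gt i x with hix | hxi
  · exact normalForm_cons_of_le hix hw IH
  refine normalForm_cons_cons_of_twistedCommutator hxi IH ?_
  by_cases ht : t.IsChain (· ≤ ·)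
  · obtain _ | ⟨y, v⟩ := t
    · exact absurd (List.isChain_singleton x) hw
    have hyx : y < x := not_le.mp fun hxy => hw (List.isChain_cons_cons.mpr ⟨hxy, ht⟩)
    exact twistedCommutator_rep_apply_normalForm_cons_of_lt hcoc hc hyx hxi IH
  · exact twistedCommutator_rep_apply_normalForm_of_not_isChain hxi ht IH

theorem twistedCommutator_rep (hcoc : ∀ x y z : L, c ⁅x, y⁆ z + c ⁅y, z⁆ x + c ⁅z, x⁆ y = 0)
    (hc : c.IsAlt) (x y : L) : twistedCommutator (rep c b) c x y = 0 := by
  refine Finsupp.lhom_ext fun w r => ?_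
  rw [← Finsupp.smul_single_one, map_smul, ← normalForm_of_isChain c b w.2,
    twistedCommutator_rep_apply_normalForm c b hc w.1
      (fun j s _ => normalForm_cons c b hcoc hc j s), smul_zero, LinearMap.zero_apply]

end Representation

end Sridharan

namespace SridharanAlgebra

variable {L : Type*} [LieRing L] [LieAlgebra ℚ L] {c c' : L →ₗ[ℚ] L →ₗ[ℚ] ℚ}

lemma ι_mul_ι (x y : L) :
    ι L c x * ι L c y = ι L c y * ι L c x + ι L c ⁅x, y⁆
      + algebraMap ℚ (SridharanAlgebra L c) (c x y) := by
  have h := RingQuot.mkAlgHom_rel ℚ (Sridharan.Rel.rel (c := c) x y)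
  simp only [map_mul, map_add, AlgHom.commutes] at h
  exact h

section Lift

variable {A : Type*} [Ring A] [Algebra ℚ A]

noncomputable def lift (f : L →ₗ[ℚ] A)
    (hf : ∀ x y, f x * f y = f y * f x + f ⁅x, y⁆ + algebraMap ℚ A (c x y)) :
    SridharanAlgebra L c →ₐ[ℚ] A :=
  RingQuot.liftAlgHom ℚ ⟨TensorAlgebra.lift ℚ f, by
    rintro _ _ ⟨x, y⟩
    simp only [map_mul, map_add, TensorAlgebra.lift_ι_apply, AlgHom.commutes]
    exact hf x y⟩

@[simp]
lemma lift_ι (f : L →ₗ[ℚ] A)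
    (hf : ∀ x y, f x * f y = f y * f x + f ⁅x, y⁆ + algebraMap ℚ A (c x y)) (x : L) :
    lift f hf (ι L c x) = f x :=
  (RingQuot.liftAlgHom_mkAlgHom_apply ℚ _ _ _).trans (TensorAlgebra.lift_ι_apply f x)

lemma hom_ext {f g : SridharanAlgebra L c →ₐ[ℚ] A} (h : ∀ x, f (ι L c x) = g (ι L c x)) :
    f = g :=
  RingQuot.ringQuot_ext' _ _ _ (TensorAlgebra.hom_ext (LinearMap.ext h))

end Lift

theorem nontrivial (hc : Sridharan.IsCocycle L c) : Nontrivial (SridharanAlgebra L c) := by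
  let b := Module.Basis.ofVectorSpace ℚ L
  let _ := IsWellOrder.linearOrder (α := Module.Basis.ofVectorSpaceIndex ℚ L) WellOrderingRel
  have : Nonempty (Sridharan.SortedWord (Module.Basis.ofVectorSpaceIndex ℚ L)) :=
    ⟨⟨[], List.isChain_nil⟩⟩
  exact (lift (Sridharan.rep c b) fun x y => (Sridharan.twistedCommutator_eq_zero_iff x y).mp
    (Sridharan.twistedCommutator_rep c b hc.2 hc.1 x y)).toRingHom.domain_nontrivial

noncomputable def homOfCohomologous (β : L →ₗ[ℚ] ℚ) (hβ : ∀ x y, c x y - c' x y = β ⁅x, y⁆) :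
    SridharanAlgebra L c →ₐ[ℚ] SridharanAlgebra L c' :=
  lift (ι L c' - Algebra.linearMap ℚ _ ∘ₗ β) fun x y => by
    have hcxy : c x y = c' x y + β ⁅x, y⁆ := by linarith [hβ x y]
    simp only [LinearMap.sub_apply, LinearMap.comp_apply, Algebra.linearMap_apply, sub_mul,
      mul_sub, ι_mul_ι (c := c') x y, hcxy, map_add, Algebra.algebraMap_eq_smul_one,
      smul_mul_assoc, mul_smul_comm, one_mul, mul_one]
    module

@[simp]
lemma homOfCohomologous_ι (β : L →ₗ[ℚ] ℚ) (hβ : ∀ x y, c x y - c' x y = β ⁅x, y⁆) (x : L) :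
    homOfCohomologous β hβ (ι L c x) = ι L c' x - algebraMap ℚ _ (β x) :=
  lift_ι _ _ x

noncomputable def equivOfCohomologous (β : L →ₗ[ℚ] ℚ) (hβ : ∀ x y, c x y - c' x y = β ⁅x, y⁆) :
    SridharanAlgebra L c ≃ₐ[ℚ] SridharanAlgebra L c' :=
  AlgEquiv.ofAlgHom (homOfCohomologous β hβ)
    (homOfCohomologous (-β) fun x y => by rw [LinearMap.neg_apply, ← hβ, neg_sub])
    (hom_ext fun x => by simp)
    (hom_ext fun x => by simp)

lemma equivOfCohomologous_ι (β : L →ₗ[ℚ] ℚ) (hβ : ∀ x y, c x y - c' x y = β ⁅x, y⁆) (x : L) :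
    equivOfCohomologous β hβ (ι L c x) = ι L c' x + algebraMap ℚ _ ((-β) x) := by
  rw [LinearMap.neg_apply, map_neg, ← sub_eq_add_neg]
  exact homOfCohomologous_ι β hβ x

theorem sub_eq_neg_of_algEquiv (hc' : Sridharan.IsCocycle L c')
    (φ : SridharanAlgebra L c ≃ₐ[ℚ] SridharanAlgebra L c') (β : L →ₗ[ℚ] ℚ)
    (hφ : ∀ x, φ (ι L c x) = ι L c' x + algebraMap ℚ _ (β x)) (x y : L) :
    c x y - c' x y = (-β) ⁅x, y⁆ := by
  have := nontrivial hc'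
  have h := congrArg φ (ι_mul_ι (c := c) x y)
  simp only [map_add, map_mul, AlgEquiv.commutes, hφ, add_mul, mul_add,
    ι_mul_ι (c := c') x y] at h
  simp only [Algebra.algebraMap_eq_smul_one, smul_mul_assoc, mul_smul_comm, one_mul,
    mul_one] at h
  have key : (c' x y - β ⁅x, y⁆ - c x y) • (1 : SridharanAlgebra L c') = 0 := by
    linear_combination (norm := module) h
  rw [LinearMap.neg_apply]
  linarith [(smul_eq_zero.mp key).resolve_right one_ne_zero]

end SridharanAlgebra

open SridharanAlgebra in
theorem sridharan_iso_iff_cohomologous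
    (L : Type*) [LieRing L] [LieAlgebra ℚ L]
    (c c' : L →ₗ[ℚ] L →ₗ[ℚ] ℚ)
    (hc' : Sridharan.IsCocycle L c') :
    (∃ (φ : SridharanAlgebra L c ≃ₐ[ℚ] SridharanAlgebra L c') (b : L →ₗ[ℚ] ℚ),
      ∀ x : L, φ (ι L c x) = ι L c' x + algebraMap ℚ (SridharanAlgebra L c') (b x))
    ↔ ∃ b : L →ₗ[ℚ] ℚ, ∀ x y : L, c x y - c' x y = b ⁅x, y⁆ := by
  constructor
  · rintro ⟨φ, β, hφ⟩
    exact ⟨-β, sub_eq_neg_of_algEquiv hc' φ β hφ⟩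
  · rintro ⟨β, hβ⟩
    exact ⟨equivOfCohomologous β hβ, -β, equivOfCohomologous_ι β hβ⟩
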